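/- The quadruple series ∑_{n₁=1}^∞ ∑_{n₂=1}^∞ ∑_{n₃=1}^∞ ∑_{n₄=1}^∞ (n₁·n₂·n₃·n₄)/(n₁+n₂+n₃+n₄)! equals (179/2520)·e. -/

import Mathlib

/-!
Substituting `nᵢ = iᵢ + 1` and collecting the terms with `i₁ + i₂ + i₃ + i₄ = n`, the coefficient
of `1 / (n + 4)!` is the coefficient of `Xⁿ` in `((1 - X)⁻²)⁴ = (1 - X)⁻⁸`, namely `C(n + 7, 7)`.
In terms of `N = n + 4` the series becomes `∑ C(N + 3, 7) / N!`, and Vandermonde's identity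
`C(N + 3, 7) = ∑ C(N, i) C(3, 7 - i)` together with `∑ C(N, i) / N! = e / i!` evaluates it to
`e (1/7! + 3/6! + 3/5! + 1/4!) = 179 e / 2520`. All terms are nonnegative, so the rearrangements
are justified in `ℝ≥0∞`.
-/

open Finset PowerSeries
open scoped Nat ENNReal

theorem sum_antidiagonal_add_choose_mul_add_choose (a b n : ℕ) :
    ∑ p ∈ antidiagonal n, (a + p.1).choose a * (b + p.2).choose b =
      (a + b + 1 + n).choose (a + b + 1) := by
  have h := congrArg (fun f : ℤ⟦X⟧ˣ => coeff n f.val) (invOneSubPow_add ℤ (a + 1) (b + 1))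
  rw [show a + 1 + (b + 1) = a + b + 1 + 1 by ring] at h
  simp only [Units.val_mul, invOneSubPow_val_succ_eq_mk_add_choose, coeff_mul, coeff_mk] at h
  exact_mod_cast h.symm

namespace ENNReal

theorem tsum_prod_eq_tsum_sum_antidiagonal {A : Type*} [AddCommMonoid A] [HasAntidiagonal A]
    (f : A × A → ℝ≥0∞) : ∑' p, f p = ∑' n, ∑ p ∈ antidiagonal n, f p := by
  rw [← HasAntidiagonal.sigmaAntidiagonalEquivProd.tsum_eq f, ENNReal.tsum_sigma']
  exact tsum_congr fun n => Finset.tsum_subtype _ _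

theorem tsum_mul_tsum_mul_apply_add {A : Type*} [AddCommMonoid A] [HasAntidiagonal A]
    (u v w : A → ℝ≥0∞) :
    ∑' i, u i * ∑' j, v j * w (i + j) = ∑' n, (∑ p ∈ antidiagonal n, u p.1 * v p.2) * w n := by
  simp_rw [← ENNReal.tsum_mul_left]
  rw [← ENNReal.tsum_prod (f := fun i j => u i * (v j * w (i + j))),
    tsum_prod_eq_tsum_sum_antidiagonal]
  refine tsum_congr fun n => ?_
  rw [Finset.sum_mul]
  refine Finset.sum_congr rfl fun p hp => ?_
  rw [← mem_antidiagonal.1 hp, mul_assoc]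

theorem tsum_add_choose_mul_tsum_add_choose_mul (a b : ℕ) (w : ℕ → ℝ≥0∞) :
    ∑' i, ((a + i).choose a : ℝ≥0∞) * ∑' j, ((b + j).choose b : ℝ≥0∞) * w (i + j) =
      ∑' n, ((a + b + 1 + n).choose (a + b + 1) : ℝ≥0∞) * w n := by
  rw [tsum_mul_tsum_mul_apply_add]
  refine tsum_congr fun n => ?_
  rw [← sum_antidiagonal_add_choose_mul_add_choose]
  push_cast
  rfl

theorem tsum_succ_mul_succ_mul_succ_mul_succ_mul (w : ℕ → ℝ≥0∞) :
    ∑' (i : ℕ) (j : ℕ) (k : ℕ) (l : ℕ),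
      ((i + 1) * (j + 1) * (k + 1) * (l + 1) : ℝ≥0∞) * w (i + j + k + l) =
      ∑' n, ((n + 7).choose 7 : ℝ≥0∞) * w n := by
  have hsucc (i : ℕ) : (i + 1 : ℝ≥0∞) = ((1 + i).choose 1 : ℕ) := by simp [add_comm]
  simp only [hsucc, mul_assoc, add_assoc, ENNReal.tsum_mul_left]
  rw [tsum_congr fun i => congrArg (_ * ·) <| tsum_congr fun j => congrArg (_ * ·) <|
      tsum_add_choose_mul_tsum_add_choose_mul 1 1 fun s => w (i + (j + s)),
    tsum_congr fun i => congrArg (_ * ·) <|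
      tsum_add_choose_mul_tsum_add_choose_mul 1 3 fun s => w (i + s),
    tsum_add_choose_mul_tsum_add_choose_mul 1 5 w]
  simp only [add_comm]

theorem ofReal_natCast_mul (n : ℕ) (x : ℝ) : ENNReal.ofReal (n * x) = n * ENNReal.ofReal x := by
  rw [ENNReal.ofReal_mul n.cast_nonneg, ENNReal.ofReal_natCast]

theorem toReal_tsum₄ {α β γ δ : Type*} {f : α → β → γ → δ → ℝ≥0∞}
    (hf : ∑' a, ∑' b, ∑' c, ∑' d, f a b c d ≠ ∞) :
    (∑' a, ∑' b, ∑' c, ∑' d, f a b c d).toReal =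
      ∑' a, ∑' b, ∑' c, ∑' d, (f a b c d).toReal := by
  have h₁ := ENNReal.ne_top_of_tsum_ne_top hf
  have h₂ a := ENNReal.ne_top_of_tsum_ne_top (h₁ a)
  have h₃ a b := ENNReal.ne_top_of_tsum_ne_top (h₂ a b)
  have h₄ a b c := ENNReal.ne_top_of_tsum_ne_top (h₃ a b c)
  rw [ENNReal.tsum_toReal_eq h₁]
  refine tsum_congr fun a => ?_
  rw [ENNReal.tsum_toReal_eq (h₂ a)]
  refine tsum_congr fun b => ?_
  rw [ENNReal.tsum_toReal_eq (h₃ a b)]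
  exact tsum_congr fun c => ENNReal.tsum_toReal_eq (h₄ a b c)

end ENNReal

theorem hasSum_choose_div_factorial (k : ℕ) :
    HasSum (fun n : ℕ => (n.choose k : ℝ) / n !) (Real.exp 1 / k !) := by
  rw [← hasSum_nat_add_iff' k, sum_eq_zero fun i hi => by
    rw [Nat.choose_eq_zero_of_lt (mem_range.1 hi), Nat.cast_zero, zero_div], sub_zero]
  have hexp : HasSum (fun n : ℕ => 1 / (n ! : ℝ)) (Real.exp 1) := by
    simpa [Real.exp_eq_exp_ℝ] using NormedSpace.expSeries_div_hasSum_exp (1 : ℝ)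
  have hterm (n : ℕ) : ((n + k).choose k : ℝ) / (n + k)! = 1 / n ! / k ! := by
    rw [← Nat.choose_symm_add, Nat.cast_add_choose]
    field_simp
  simpa only [hterm] using hexp.div_const (k ! : ℝ)

theorem hasSum_add_choose_div_factorial (m k : ℕ) :
    HasSum (fun n : ℕ => ((n + m).choose k : ℝ) / n !)
      (Real.exp 1 * ∑ p ∈ antidiagonal k, (m.choose p.2 : ℝ) / (p.1)!) := by
  have hterm (n : ℕ) : ((n + m).choose k : ℝ) / n ! =
      ∑ p ∈ antidiagonal k, (m.choose p.2 : ℝ) * ((n.choose p.1 : ℝ) / n !) := by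
    rw [Nat.add_choose_eq, Nat.cast_sum, sum_div]
    push_cast
    exact sum_congr rfl fun p _ => by ring
  rw [mul_sum, sum_congr rfl fun p _ => mul_div_left_comm _ _ _]
  simpa only [hterm] using
    hasSum_sum fun (p : ℕ × ℕ) _ => (hasSum_choose_div_factorial p.1).mul_left (m.choose p.2 : ℝ)

theorem hasSum_add_seven_choose_div_factorial :
    HasSum (fun n : ℕ => ((n + 7).choose 7 : ℝ) / (n + 4)!) (179 / 2520 * Real.exp 1) := by
  have h := (hasSum_nat_add_iff' 4).mpr (hasSum_add_choose_div_factorial 3 7)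
  have hcoeff : ∑ p ∈ antidiagonal 7, (Nat.choose 3 p.2 : ℝ) / (p.1)! = 179 / 2520 := by
    norm_num [Finset.Nat.sum_antidiagonal_eq_sum_range_succ_mk, Finset.sum_range_succ,
      Nat.factorial, Nat.choose]
  have hhead : ∑ i ∈ range 4, ((i + 3).choose 7 : ℝ) / i ! = 0 :=
    sum_eq_zero fun i hi => by
      rw [Nat.choose_eq_zero_of_lt (by simp at hi; omega), Nat.cast_zero, zero_div]
  rwa [hcoeff, hhead, sub_zero, mul_comm] at h

theorem ENNReal.tsum_pnat_ofReal_mul_div_factorial_add :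
    ∑' (a : ℕ+) (b : ℕ+) (c : ℕ+) (d : ℕ+),
      ENNReal.ofReal ((a : ℝ) * b * c * d / (a + b + c + d : ℕ)!) =
      ENNReal.ofReal (179 / 2520 * Real.exp 1) := by
  have hterm (i j k l : ℕ) :
      ENNReal.ofReal (((i + 1 : ℕ) : ℝ) * (j + 1 : ℕ) * (k + 1 : ℕ) * (l + 1 : ℕ) /
        ((i + 1) + (j + 1) + (k + 1) + (l + 1))!) =
      ((i + 1) * (j + 1) * (k + 1) * (l + 1) : ℝ≥0∞) *
        ENNReal.ofReal ((i + j + k + l + 4)! : ℝ)⁻¹ := by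
    rw [show (i + 1) + (j + 1) + (k + 1) + (l + 1) = i + j + k + l + 4 by ring, div_eq_mul_inv,
      ← Nat.cast_mul, ← Nat.cast_mul, ← Nat.cast_mul, ENNReal.ofReal_natCast_mul]
    push_cast
    rfl
  simp only [← Equiv.pnatEquivNat.symm.tsum_eq, Equiv.pnatEquivNat_symm_apply, Nat.succPNat_coe,
    Nat.succ_eq_add_one, hterm]
  rw [tsum_succ_mul_succ_mul_succ_mul_succ_mul fun n => ENNReal.ofReal ((n + 4)! : ℝ)⁻¹,
    ← hasSum_add_seven_choose_div_factorial.tsum_eq,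
    ENNReal.ofReal_tsum_of_nonneg (fun n => by positivity)
      hasSum_add_seven_choose_div_factorial.summable]
  simp only [div_eq_mul_inv, ENNReal.ofReal_natCast_mul]

theorem stmt_16 :
    ∑' n₁ : ℕ+, ∑' n₂ : ℕ+, ∑' n₃ : ℕ+, ∑' n₄ : ℕ+,
      ((n₁ : ℝ) * n₂ * n₃ * n₄) / (Nat.factorial (n₁ + n₂ + n₃ + n₄ : ℕ))
      = (179 / 2520) * Real.exp 1 := by
  have h := ENNReal.tsum_pnat_ofReal_mul_div_factorial_add
  rw [← ENNReal.toReal_ofReal (by positivity : 0 ≤ 179 / 2520 * Real.exp 1), ← h,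
    ENNReal.toReal_tsum₄ (h ▸ ENNReal.ofReal_ne_top)]
  simp (disch := positivity) only [ENNReal.toReal_ofReal]
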